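/- Let P be a finite connected poset, T a maximal proper tubing, τ ∉ T a proper tube, and σ = conv_T(τ) the minimal tube in T ∪ {P} containing τ. Then T partitions σ into a lower set A and an upper set B (each a tube of T, a singleton, or a union prescribed by T) such that both A and B intersect τ. -/

import Mathlib

/-! The maximal members of `T` strictly inside `σ`, together with singletons for the points they
miss, partition `σ` into convex connected blocks. Comparabilities between blocks give a relation
`≺` that is acyclic because `T` is: a singleton block in a cycle can be short-cut, its two
neighbours being distinct by convexity. The tube `τ` meets two blocks, so by connectedness of `σ`
there is a pair `X ≺ Y` with no block strictly between them. Then `X ∪ Y` is a tube, nested or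
disjoint with every member of `T`, and adding it to `T` creates no cycle; maximality of `T` forces
`X ∪ Y = σ`, and acyclicity of `≺` makes `X` a lower and `Y` an upper set. -/

open Finset

section Defs
variable {α : Type*} [Fintype α] [PartialOrder α] [DecidableEq α]

/-- `τ` is connected as an induced subgraph of the Hasse diagram of the poset. -/
def IsConnectedIn (τ : Finset α) : Prop :=
  ∀ a ∈ τ, ∀ b ∈ τ,
    Relation.ReflTransGen (fun x y => x ∈ τ ∧ y ∈ τ ∧ (x ⋖ y ∨ y ⋖ x)) a b

/-- `τ` is (order-)convex. -/
def IsConvexIn (τ : Finset α) : Prop :=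
  ∀ a ∈ τ, ∀ c ∈ τ, ∀ b, a ≤ b → b ≤ c → b ∈ τ

/-- A tube: connected, convex, of size at least 2. -/
def IsTube (τ : Finset α) : Prop :=
  IsConnectedIn τ ∧ IsConvexIn τ ∧ 2 ≤ τ.card

/-- A proper tube additionally has at most `|P| - 1` elements. -/
def IsProperTube (τ : Finset α) : Prop :=
  IsTube τ ∧ τ.card ≤ Fintype.card α - 1

open Classical in
/-- `α_τ(p) = Σ_{i ⋖ j, i,j ∈ τ} (p j - p i)`, over covering relations inside `τ`. -/
noncomputable def alphaF (τ : Finset α) (p : α → ℝ) : ℝ :=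
  ∑ i ∈ τ, ∑ j ∈ τ, if i ⋖ j then p j - p i else 0

/-- `diam_S(p) = max_{i,j ∈ S} |p i - p j|`. -/
noncomputable def diamF (S : Finset α) (p : α → ℝ) : ℝ :=
  if h : (S ×ˢ S).Nonempty then (S ×ˢ S).sup' h fun ij => |p ij.1 - p ij.2| else 0

open Classical in
/-- `conv S = {b : ∃ a c ∈ S, a ≤ b ≤ c}`. -/
noncomputable def convF (S : Finset α) : Finset α :=
  univ.filter fun b => ∃ a ∈ S, ∃ c ∈ S, a ≤ b ∧ b ≤ c

/-- The relation `σ ≺ τ` on disjoint tubes of a tubing. -/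
def TubingRel (T : Finset (Finset α)) (σ τ : Finset α) : Prop :=
  σ ∈ T ∧ τ ∈ T ∧ (∀ x ∈ σ, x ∉ τ) ∧ ∃ a ∈ σ, ∃ b ∈ τ, a < b

/-- A proper tubing: proper tubes, pairwise nested or disjoint, with acyclic `≺`. -/
def IsProperTubing (T : Finset (Finset α)) : Prop :=
  (∀ τ ∈ T, IsProperTube τ) ∧
  (∀ σ ∈ T, ∀ τ ∈ T, σ ⊆ τ ∨ τ ⊆ σ ∨ ∀ x ∈ σ, x ∉ τ) ∧
  ∀ τ ∈ T, ¬ Relation.TransGen (TubingRel T) τ τ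

/-- A maximal proper tubing. -/
def IsMaximalTubing (T : Finset (Finset α)) : Prop :=
  IsProperTubing T ∧ ∀ T', IsProperTubing T' → T ⊆ T' → T = T'

end Defs

open Relation

section Hasse

variable {α : Type*} [PartialOrder α] {s t : Finset α} {a b : α}

/-- The adjacency relation of `IsConnectedIn s`. -/
def HasseAdj (s : Finset α) (x y : α) : Prop :=
  x ∈ s ∧ y ∈ s ∧ (x ⋖ y ∨ y ⋖ x)

instance (s : Finset α) : Std.Symm (HasseAdj s) :=
  ⟨fun _ _ ⟨hx, hy, h⟩ => ⟨hy, hx, h.symm⟩⟩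

lemma HasseAdj.mono (hst : s ⊆ t) {x y : α} (h : HasseAdj s x y) : HasseAdj t x y :=
  ⟨hst h.1, hst h.2.1, h.2.2⟩

lemma IsConvexIn.reflTransGen_hasseAdj [Fintype α] (hs : IsConvexIn s) (ha : a ∈ s) (hb : b ∈ s)
    (hab : a ≤ b) : ReflTransGen (HasseAdj s) a b := by
  classical
  let := Fintype.toLocallyFiniteOrder (α := α)
  suffices ∀ x, ReflTransGen (· ⋖ ·) x b → a ≤ x → ReflTransGen (HasseAdj s) x b from
    this a (le_iff_reflTransGen_covBy.1 hab) le_rfl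
  intro x hxb
  induction hxb using ReflTransGen.head_induction_on with
  | refl => exact fun _ => .refl
  | head hxy hyb ih =>
    intro hax
    have hy : _ ≤ b := le_iff_reflTransGen_covBy.2 hyb
    exact .head ⟨hs a ha b hb _ hax (hxy.le.trans hy), hs a ha b hb _ (hax.trans hxy.le) hy,
      .inl hxy⟩ (ih (hax.trans hxy.le))

lemma IsConnectedIn.union [DecidableEq α] (hs : IsConnectedIn s) (ht : IsConnectedIn t) (ha : a ∈ s)
    (hb : b ∈ t) (hab : ReflTransGen (HasseAdj (s ∪ t)) a b) : IsConnectedIn (s ∪ t) := by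
  have hs' : ∀ x ∈ s, ∀ y ∈ s, ReflTransGen (HasseAdj (s ∪ t)) x y := fun x hx y hy =>
    ReflTransGen.mono (fun _ _ => HasseAdj.mono subset_union_left) _ _ (hs x hx y hy)
  have ht' : ∀ x ∈ t, ∀ y ∈ t, ReflTransGen (HasseAdj (s ∪ t)) x y := fun x hx y hy =>
    ReflTransGen.mono (fun _ _ => HasseAdj.mono subset_union_right) _ _ (ht x hx y hy)
  intro x hx y hy
  rcases mem_union.1 hx with hx | hx <;> rcases mem_union.1 hy with hy | hy
  · exact hs' x hx y hy
  · exact ((hs' x hx a ha).trans hab).trans (ht' b hb y hy)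
  · exact ((ht' x hx b hb).trans (Std.Symm.symm _ _ hab)).trans (hs' a ha y hy)
  · exact ht' x hx y hy

end Hasse

section Block

variable {α : Type*} [DecidableEq α]

def IsLaminar (T : Finset (Finset α)) : Prop :=
  ∀ s ∈ T, ∀ t ∈ T, s ⊆ t ∨ t ⊆ s ∨ ∀ x ∈ s, x ∉ t

/-- For laminar `T`, the largest member of `T` strictly inside `σ` containing `x`, or `{x}` if
there is none (`block_eq_singleton_or`). -/
def block (T : Finset (Finset α)) (σ : Finset α) (x : α) : Finset α :=
  insert x ((T.filter fun t => t ⊂ σ ∧ x ∈ t).sup id)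

variable {T : Finset (Finset α)} {σ t : Finset α} {x y z : α}

lemma mem_block_self (T : Finset (Finset α)) (σ : Finset α) (x : α) : x ∈ block T σ x :=
  mem_insert_self _ _

lemma subset_block (ht : t ∈ T) (htσ : t ⊂ σ) (hx : x ∈ t) : t ⊆ block T σ x :=
  (le_sup (f := id) (mem_filter.2 ⟨ht, htσ, hx⟩)).trans (subset_insert _ _)

lemma block_subset (hx : x ∈ σ) : block T σ x ⊆ σ :=
  insert_subset hx <| Finset.sup_le fun _ ht => (mem_filter.1 ht).2.1.subset

lemma block_eq_singleton_or (hT : IsLaminar T) (x : α) :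
    block T σ x = {x} ∨ (block T σ x ∈ T ∧ block T σ x ⊂ σ) := by
  set F := T.filter fun t => t ⊂ σ ∧ x ∈ t
  rcases F.eq_empty_or_nonempty with hF | hF
  · left
    simp [block, F, hF]
  obtain ⟨t, htF, hmax⟩ := F.exists_maximal hF
  obtain ⟨htT, htσ, hxt⟩ := mem_filter.1 htF
  have hle : ∀ s ∈ F, s ⊆ t := by
    intro s hsF
    obtain ⟨hsT, -, hxs⟩ := mem_filter.1 hsF
    rcases hT s hsT t htT with h | h | h
    · exact h
    · exact hmax hsF h
    · exact absurd hxt (h x hxs)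
  have : block T σ x = t := by
    change insert x (F.sup id) = t
    rw [le_antisymm (Finset.sup_le (f := id) hle) (le_sup (f := id) htF), insert_eq_self.2 hxt]
  exact .inr (this ▸ ⟨htT, htσ⟩)

lemma block_eq_of_mem (hT : IsLaminar T) (hy : y ∈ block T σ x) :
    block T σ y = block T σ x := by
  rcases block_eq_singleton_or (σ := σ) hT x with hx | ⟨hxT, hxσ⟩
  · rw [hx, mem_singleton] at hy
    rw [hy]
  have hxy := subset_block hxT hxσ hy
  rcases block_eq_singleton_or (σ := σ) hT y with hy' | ⟨hyT, hyσ⟩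
  · have := hxy (mem_block_self T σ x)
    rw [hy', mem_singleton] at this
    rw [this]
  · exact le_antisymm (subset_block hyT hyσ (hxy (mem_block_self T σ x))) hxy

lemma block_eq_block (hT : IsLaminar T) (hx : z ∈ block T σ x) (hy : z ∈ block T σ y) :
    block T σ x = block T σ y := by
  rw [← block_eq_of_mem hT hx, ← block_eq_of_mem hT hy]

lemma IsLaminar.insert (hT : IsLaminar T) {ρ : Finset α}
    (hρ : ∀ t ∈ T, t ⊆ ρ ∨ ρ ⊆ t ∨ ∀ x ∈ t, x ∉ ρ) : IsLaminar (insert ρ T) := by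
  intro s hs t ht
  rcases mem_insert.1 hs with rfl | hs' <;> rcases mem_insert.1 ht with rfl | ht'
  · exact .inl subset_rfl
  · rcases hρ t ht' with h | h | h
    · exact .inr (.inl h)
    · exact .inl h
    · exact .inr (.inr fun x hxs hxt => h x hxt hxs)
  · exact hρ s hs'
  · exact hT s hs' t ht'

lemma mem_of_mem_insert_univ [Fintype α] (hσ : σ ∈ insert univ T) (ht : ¬ t ⊆ σ) : σ ∈ T :=
  (mem_insert.1 hσ).resolve_left (by rintro rfl; exact ht (subset_univ t))

lemma block_mem_or_card_eq_one (hT : IsLaminar T) (x : α) :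
    block T σ x ∈ T ∨ (block T σ x).card = 1 := by
  rcases block_eq_singleton_or (σ := σ) hT x with h | h
  · exact .inr (h ▸ card_singleton x)
  · exact .inl h.1

end Block

section Tubing

variable {α : Type*} [Fintype α] [PartialOrder α] {T : Finset (Finset α)} {σ t : Finset α}

lemma IsProperTubing.isConvexIn (hT : IsProperTubing T) : ∀ t ∈ T, IsConvexIn t :=
  fun t ht => (hT.1 t ht).1.2.1

lemma IsProperTubing.isConnectedIn (hT : IsProperTubing T) : ∀ t ∈ T, IsConnectedIn t :=
  fun t ht => (hT.1 t ht).1.1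

lemma IsProperTubing.isLaminar [DecidableEq α] (hT : IsProperTubing T) : IsLaminar T := hT.2.1

variable [DecidableEq α]

lemma IsProperTubing.isConvexIn_of_mem_insert_univ (hT : IsProperTubing T)
    (hσ : σ ∈ insert univ T) : IsConvexIn σ := by
  rcases mem_insert.1 hσ with rfl | hσ
  · exact fun _ _ _ _ b _ _ => mem_univ b
  · exact hT.isConvexIn σ hσ

lemma IsProperTubing.isConnectedIn_of_mem_insert_univ (hconn : IsConnectedIn (univ : Finset α))
    (hT : IsProperTubing T) (hσ : σ ∈ insert univ T) : IsConnectedIn σ := by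
  rcases mem_insert.1 hσ with rfl | hσ
  · exact hconn
  · exact hT.isConnectedIn σ hσ

end Tubing

section BlockRel

variable {α : Type*} [PartialOrder α] [DecidableEq α]
  {T : Finset (Finset α)} {σ C D : Finset α} {y u v : α}

lemma block_isConvexIn (hT : ∀ t ∈ T, IsConvexIn t) (hlam : IsLaminar T) (x : α) :
    IsConvexIn (block T σ x) := by
  rcases block_eq_singleton_or (σ := σ) hlam x with h | h
  · rw [h]
    intro a ha c hc b hab hbc
    rw [mem_singleton] at ha hc ⊢
    subst ha hc
    exact le_antisymm hbc hab
  · exact hT _ h.1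

lemma block_isConnectedIn (hT : ∀ t ∈ T, IsConnectedIn t) (hlam : IsLaminar T) (x : α) :
    IsConnectedIn (block T σ x) := by
  rcases block_eq_singleton_or (σ := σ) hlam x with h | h
  · rw [h]
    intro a ha c hc
    rw [mem_singleton.1 ha, mem_singleton.1 hc]
  · exact hT _ h.1

def BlockRel (T : Finset (Finset α)) (σ C D : Finset α) : Prop :=
  (∃ x ∈ σ, block T σ x = C) ∧ (∃ y ∈ σ, block T σ y = D) ∧ C ≠ D ∧ ∃ a ∈ C, ∃ b ∈ D, a < b

lemma blockRel_of_lt (hu : u ∈ σ) (hv : v ∈ σ) (huv : u < v)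
    (hne : block T σ u ≠ block T σ v) : BlockRel T σ (block T σ u) (block T σ v) :=
  ⟨⟨u, hu, rfl⟩, ⟨v, hv, rfl⟩, hne, u, mem_block_self T σ u, v, mem_block_self T σ v, huv⟩

lemma reflTransGen_blockRel_of_le (hu : u ∈ σ) (hv : v ∈ σ) (huv : u ≤ v) :
    ReflTransGen (BlockRel T σ) (block T σ u) (block T σ v) := by
  by_cases h : block T σ u = block T σ v
  · rw [h]
  · exact .single (blockRel_of_lt hu hv (huv.lt_of_ne (by rintro rfl; exact h rfl)) h)

lemma BlockRel.disjoint (hlam : IsLaminar T) (h : BlockRel T σ C D) : ∀ x ∈ C, x ∉ D := by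
  obtain ⟨⟨c, -, rfl⟩, ⟨d, -, rfl⟩, hne, -⟩ := h
  exact fun x hxC hxD => hne (block_eq_block hlam hxC hxD)

/-- `C ≠ D` because blocks are convex. -/
lemma BlockRel.trans_singleton (hT : ∀ t ∈ T, IsConvexIn t) (hlam : IsLaminar T)
    (h₁ : BlockRel T σ C {y}) (h₂ : BlockRel T σ {y} D) : BlockRel T σ C D := by
  obtain ⟨⟨c, hc, rfl⟩, ⟨w, -, hw⟩, hCy, a, ha, y', hy', hay⟩ := h₁
  obtain ⟨-, hD, -, y'', hy'', d, hd, hyd⟩ := h₂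
  rw [mem_singleton.1 hy'] at hay
  rw [mem_singleton.1 hy''] at hyd
  refine ⟨⟨c, hc, rfl⟩, hD, ?_, a, ha, d, hd, hay.trans hyd⟩
  rintro rfl
  have hwy : w = y := mem_singleton.1 (hw ▸ mem_block_self T σ w)
  rw [hwy] at hw
  have hyC := block_isConvexIn (σ := σ) hT hlam c a ha d hd y hay.le hyd.le
  exact hCy ((block_eq_of_mem hlam hyC).symm.trans hw)

/-- Skipping the singleton blocks of a chain leaves a chain of `T`. -/
lemma transGen_tubingRel_of_transGen_blockRel (hT : ∀ t ∈ T, IsConvexIn t)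
    (hlam : IsLaminar T) (h : TransGen (BlockRel T σ) C D) (hC : C ∈ T) (hD : D ∈ T) :
    TransGen (TubingRel T) C D := by
  have h' : TransGen (fun C D => BlockRel T σ C D ∧ D ∈ T) C D := by
    clear hC
    induction h using TransGen.head_induction_on with
    | single h => exact .single ⟨h, hD⟩
    | head hCE _ ih =>
      obtain ⟨w, -, rfl⟩ := hCE.2.1
      rcases block_eq_singleton_or (σ := σ) hlam w with hw | hw
      · obtain ⟨F, hEF, hFD⟩ := TransGen.head'_iff.1 ih
        rw [hw] at hCE hEF
        exact .head' ⟨hCE.trans_singleton hT hlam hEF.1, hEF.2⟩ hFD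
      · exact .head ⟨hCE, hw.1⟩ ih
  clear h
  induction h' using TransGen.head_induction_on with
  | single h => exact .single ⟨hC, h.2, h.1.disjoint hlam, h.1.2.2.2⟩
  | head h _ ih => exact .head ⟨hC, h.2, h.1.disjoint hlam, h.1.2.2.2⟩ (ih h.2)

lemma transGen_blockRel_lt_or_mem (hlam : IsLaminar T) (h : TransGen (BlockRel T σ) C D) :
    (∃ a ∈ C, ∃ b ∈ D, a < b) ∨
      ∃ E ∈ T, TransGen (BlockRel T σ) C E ∧ ReflTransGen (BlockRel T σ) E D := by
  induction h with
  | single h => exact .inl h.2.2.2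
  | @tail F D hCF hFD ih =>
    rcases ih with ⟨a, ha, b, hb, hab⟩ | ⟨E, hE, hCE, hEF⟩
    · obtain ⟨w, -, rfl⟩ := hFD.1
      rcases block_eq_singleton_or (σ := σ) hlam w with hw | hw
      · obtain ⟨b', hb', d, hd, hbd⟩ := hFD.2.2.2
        rw [hw, mem_singleton] at hb hb'
        exact .inl ⟨a, ha, d, hd, hab.trans (hb ▸ hb' ▸ hbd)⟩
      · exact .inr ⟨_, hw.1, hCF, .single hFD⟩
    · exact .inr ⟨E, hE, hCE, hEF.tail hFD⟩

lemma blockRel_acyclic [Fintype α] (hT : IsProperTubing T) (C : Finset α) :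
    ¬ TransGen (BlockRel T σ) C C := by
  have hmem : ∀ E ∈ T, ¬ TransGen (BlockRel T σ) E E := fun E hE h =>
    hT.2.2 E hE (transGen_tubingRel_of_transGen_blockRel hT.isConvexIn hT.isLaminar h hE hE)
  intro h
  rcases transGen_blockRel_lt_or_mem hT.isLaminar h with ⟨a, ha, b, hb, hab⟩ | ⟨E, hE, hCE, hEC⟩
  · obtain ⟨F, hCF, -⟩ := TransGen.head'_iff.1 h
    obtain ⟨w, -, rfl⟩ := hCF.1
    rcases block_eq_singleton_or (σ := σ) hT.isLaminar w with hw | hw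
    · rw [hw, mem_singleton] at ha hb
      exact hab.ne (ha.trans hb.symm)
    · exact hmem _ hw.1 h
  · exact hmem E hE (TransGen.trans_right hEC hCE)

end BlockRel

section Insert

variable {α : Type*} [PartialOrder α] [DecidableEq α] {T : Finset (Finset α)}
  {σ ρ u w a b : Finset α}

lemma transGen_tubingRel_insert (h : TransGen (TubingRel (insert ρ T)) a b) :
    TransGen (TubingRel T) a b ∨
      ReflTransGen (TubingRel (insert ρ T)) a ρ ∧ ReflTransGen (TubingRel (insert ρ T)) ρ b := by
  have step : ∀ {u w}, TubingRel (insert ρ T) u w → TubingRel T u w ∨ u = ρ ∨ w = ρ := by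
    intro u w h
    by_cases hu : u = ρ
    · exact .inr (.inl hu)
    by_cases hw : w = ρ
    · exact .inr (.inr hw)
    exact .inl ⟨(mem_insert.1 h.1).resolve_left hu, (mem_insert.1 h.2.1).resolve_left hw, h.2.2⟩
  induction h with
  | single h =>
    rcases step h with h' | rfl | rfl
    · exact .inl (.single h')
    · exact .inr ⟨.refl, .single h⟩
    · exact .inr ⟨.single h, .refl⟩
  | tail hac hcd ih =>
    rcases ih with ih | ⟨h₁, h₂⟩
    · rcases step hcd with h' | rfl | rfl
      · exact .inl (ih.tail h')
      · exact .inr ⟨hac.to_reflTransGen, .single hcd⟩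
      · exact .inr ⟨(hac.tail hcd).to_reflTransGen, .refl⟩
    · exact .inr ⟨h₁, h₂.tail hcd⟩

lemma acyclic_insert (hT : ∀ t ∈ T, ¬ TransGen (TubingRel T) t t)
    (hρ : ¬ TransGen (TubingRel (insert ρ T)) ρ ρ) (t : Finset α) :
    ¬ TransGen (TubingRel (insert ρ T)) t t := by
  intro h
  rcases transGen_tubingRel_insert h with h' | ⟨h₁, h₂⟩
  · obtain ⟨_, hstep, -⟩ := TransGen.head'_iff.1 h'
    exact hT t hstep.1 h'
  · exact hρ (TransGen.trans_right h₂ (h.trans_left h₁))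

variable [Fintype α]

lemma tubingRel_insert_collapse (hT : IsLaminar T) (hσ : σ ∈ insert univ T) (hρσ : ρ ⊆ σ)
    (h : TubingRel (insert ρ T) u w) :
    ReflTransGen (TubingRel T) (if u ⊆ σ then σ else u) (if w ⊆ σ then σ else w) := by
  obtain ⟨hu, hw, huw, a, ha, b, hb, hab⟩ := h
  have hmem : ∀ {t}, t ∈ insert ρ T → ¬ t ⊆ σ → t ∈ T := fun ht htσ =>
    (mem_insert.1 ht).resolve_left (by rintro rfl; exact htσ hρσ)
  have hdisj : ∀ {t x}, t ∈ T → ¬ t ⊆ σ → x ∈ σ → x ∉ t → ∀ y ∈ σ, y ∉ t := by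
    intro t x ht htσ hx hxt
    rcases hT σ (mem_of_mem_insert_univ hσ htσ) t ht with h | h | h
    · exact absurd (h hx) hxt
    · exact absurd h htσ
    · exact h
  by_cases huσ : u ⊆ σ <;> by_cases hwσ : w ⊆ σ <;>
    simp only [huσ, hwσ, if_true, if_false, ReflTransGen.refl]
  · exact .single ⟨mem_of_mem_insert_univ hσ hwσ, hmem hw hwσ,
      hdisj (hmem hw hwσ) hwσ (huσ ha) (huw a ha), a, huσ ha, b, hb, hab⟩
  · exact .single ⟨hmem hu huσ, mem_of_mem_insert_univ hσ huσ,
      fun x hxu hxσ => hdisj (hmem hu huσ) huσ (hwσ hb) (fun hbu => huw b hbu hb) x hxσ hxu,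
      a, ha, b, hwσ hb, hab⟩
  · exact .single ⟨hmem hu huσ, hmem hw hwσ, huw, a, ha, b, hb, hab⟩

lemma subset_of_cycle_insert (hT : IsLaminar T) (hacyc : ∀ t ∈ T, ¬ TransGen (TubingRel T) t t)
    (hσ : σ ∈ insert univ T) (hρσ : ρ ⊆ σ)
    (h₁ : ReflTransGen (TubingRel (insert ρ T)) ρ w)
    (h₂ : ReflTransGen (TubingRel (insert ρ T)) w ρ) : w ⊆ σ := by
  by_contra hw
  have lift := ReflTransGen.lift' (fun u => if u ⊆ σ then σ else u)
    (fun _ _ h => tubingRel_insert_collapse hT hσ hρσ h)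
  have h₁' := lift _ _ h₁
  have h₂' := lift _ _ h₂
  simp only [Function.onFun, hρσ, hw, if_true, if_false] at h₁' h₂'
  rcases reflTransGen_iff_eq_or_transGen.1 h₁' with h | h
  · exact hw (h ▸ subset_rfl)
  · exact hacyc σ (mem_of_mem_insert_univ hσ hw) (h.trans_left h₂')

end Insert

section Cover

variable {α : Type*} [PartialOrder α] [DecidableEq α]
  {T : Finset (Finset α)} {σ C D X Y : Finset α} {a b x y : α}

lemma exists_blockRel (hσ : IsConnectedIn σ) (hx : x ∈ σ) (hy : y ∈ σ)
    (hne : block T σ x ≠ block T σ y) : ∃ C D, BlockRel T σ C D := by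
  by_contra! h
  apply hne
  have hxy := hσ x hx y hy
  clear hy hne
  induction hxy with
  | refl => rfl
  | tail _ hbc ih =>
    obtain ⟨hb, hc, hcov⟩ := hbc
    refine ih.trans (by_contra fun hne => ?_)
    rcases hcov with hcov | hcov
    · exact h _ _ (blockRel_of_lt hb hc hcov.lt hne)
    · exact h _ _ (blockRel_of_lt hc hb hcov.lt (Ne.symm hne))

def IsBlockCover (T : Finset (Finset α)) (σ X Y : Finset α) : Prop :=
  BlockRel T σ X Y ∧ ∀ b ∈ σ, ReflTransGen (BlockRel T σ) X (block T σ b) →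
    ReflTransGen (BlockRel T σ) (block T σ b) Y → b ∈ X ∪ Y

variable [Fintype α]

/-- A pair `X ≺ Y` minimising the number of elements whose block lies between `X` and `Y`
is a covering pair. -/
lemma exists_isBlockCover (hT : IsProperTubing T) (h : BlockRel T σ C D) :
    ∃ X Y, IsBlockCover T σ X Y := by
  classical
  let I : Finset α × Finset α → Finset α := fun p => σ.filter fun b =>
    ReflTransGen (BlockRel T σ) p.1 (block T σ b) ∧ ReflTransGen (BlockRel T σ) (block T σ b) p.2
  obtain ⟨⟨X, Y⟩, hXY, hmin⟩ :=
    (measure fun p => (I p).card).wf.has_min {p | BlockRel T σ p.1 p.2} ⟨(C, D), h⟩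
  refine ⟨X, Y, hXY, fun b hb hXb hbY => by_contra fun hbXY => ?_⟩
  have hXb' : X ≠ block T σ b := fun h => hbXY (mem_union_left _ (h ▸ mem_block_self T σ b))
  have hbY' : block T σ b ≠ Y := fun h => hbXY (mem_union_right _ (h ▸ mem_block_self T σ b))
  obtain ⟨G, hXG, hGb⟩ := (ReflTransGen.cases_head hXb).resolve_left hXb'
  obtain ⟨y, hy, rfl⟩ := hXY.2.1
  refine hmin (X, G) hXG (card_lt_card ((ssubset_iff_of_subset fun e he => ?_).2
    ⟨y, ?_, fun hyG => ?_⟩))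
  · simp only [I, mem_filter] at he ⊢
    exact ⟨he.1, he.2.1, he.2.2.trans (hGb.trans hbY)⟩
  · exact mem_filter.2 ⟨hy, .single hXY, .refl⟩
  · -- otherwise `block y ≼ G ≼ block b ≺ block y` would be a cycle
    have hbY'' := (reflTransGen_iff_eq_or_transGen.1 hbY).resolve_left (Ne.symm hbY')
    exact blockRel_acyclic hT _ (TransGen.trans_right ((mem_filter.1 hyG).2.2.trans hGb) hbY'')

lemma BlockRel.not_lt (hT : IsProperTubing T) (h : BlockRel T σ X Y) (ha : a ∈ Y) (hb : b ∈ X) :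
    ¬ a < b := fun hab =>
  blockRel_acyclic hT X (.tail (.single h) ⟨h.2.1, h.1, h.2.2.1.symm, a, ha, b, hb, hab⟩)

lemma BlockRel.mem_left_of_le (hT : IsProperTubing T) (h : BlockRel T σ X Y) (hσ : X ∪ Y = σ)
    (hb : b ∈ X) (ha : a ∈ σ) (hab : a ≤ b) : a ∈ X := by
  by_contra haX
  have haY : a ∈ Y := (mem_union.1 (hσ ▸ ha)).resolve_left haX
  exact h.not_lt hT haY hb (hab.lt_of_ne (by rintro rfl; exact haX hb))

lemma BlockRel.mem_right_of_le (hT : IsProperTubing T) (h : BlockRel T σ X Y) (hσ : X ∪ Y = σ)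
    (ha : a ∈ Y) (hb : b ∈ σ) (hab : a ≤ b) : b ∈ Y := by
  by_contra hbY
  have hbX : b ∈ X := (mem_union.1 (hσ ▸ hb)).resolve_right hbY
  exact h.not_lt hT ha hbX (hab.lt_of_ne (by rintro rfl; exact hbY ha))

end Cover

section Merge

variable {α : Type*} [PartialOrder α] [DecidableEq α]
  {T : Finset (Finset α)} {σ w X Y : Finset α} {a : α}

lemma BlockRel.union_subset (h : BlockRel T σ X Y) : X ∪ Y ⊆ σ := by
  obtain ⟨⟨x, hx, rfl⟩, ⟨y, hy, rfl⟩, -⟩ := h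
  exact Finset.union_subset (block_subset hx) (block_subset hy)

lemma BlockRel.block_eq_of_mem_union (hT : IsLaminar T) (h : BlockRel T σ X Y)
    (ha : a ∈ X ∪ Y) : block T σ a = X ∨ block T σ a = Y := by
  obtain ⟨⟨x, -, rfl⟩, ⟨y, -, rfl⟩, -⟩ := h
  exact (mem_union.1 ha).imp (block_eq_of_mem hT) (block_eq_of_mem hT)

lemma BlockRel.block_subset_union (hT : IsLaminar T) (h : BlockRel T σ X Y)
    (ha : a ∈ X ∪ Y) : block T σ a ⊆ X ∪ Y := by
  rcases h.block_eq_of_mem_union hT ha with h | h <;> rw [h]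
  exacts [subset_union_left, subset_union_right]

lemma BlockRel.reflTransGen_of_mem_union (hT : IsLaminar T) (h : BlockRel T σ X Y)
    (ha : a ∈ X ∪ Y) :
    ReflTransGen (BlockRel T σ) X (block T σ a) ∧ ReflTransGen (BlockRel T σ) (block T σ a) Y := by
  rcases h.block_eq_of_mem_union hT ha with h' | h' <;> rw [h']
  exacts [⟨.refl, .single h⟩, ⟨.single h, .refl⟩]

lemma IsBlockCover.isConvexIn (hT : IsLaminar T) (hσ : IsConvexIn σ) (h : IsBlockCover T σ X Y) :
    IsConvexIn (X ∪ Y) := by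
  intro a ha c hc b hab hbc
  have hsub := h.1.union_subset
  have hb := hσ a (hsub ha) c (hsub hc) b hab hbc
  exact h.2 b hb ((h.1.reflTransGen_of_mem_union hT ha).1.trans
      (reflTransGen_blockRel_of_le (hsub ha) hb hab))
    ((reflTransGen_blockRel_of_le hb (hsub hc) hbc).trans (h.1.reflTransGen_of_mem_union hT hc).2)

lemma IsBlockCover.union_notMem (hT : IsLaminar T) (h : IsBlockCover T σ X Y) (hss : X ∪ Y ⊂ σ) :
    X ∪ Y ∉ T := by
  obtain ⟨⟨x, -, rfl⟩, ⟨y, -, rfl⟩, hne, -⟩ := h.1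
  intro hρ
  have hx := mem_union_left (block T σ y) (mem_block_self T σ x)
  have hy := mem_union_right (block T σ x) (mem_block_self T σ y)
  exact hne (block_eq_block hT (subset_block hρ hss hx hy) (mem_block_self T σ y))

variable [Fintype α]

lemma IsBlockCover.isTube (hT : IsProperTubing T) (hσ : IsConvexIn σ) (h : IsBlockCover T σ X Y) :
    IsTube (X ∪ Y) := by
  have hconv := h.isConvexIn hT.isLaminar hσ
  obtain ⟨⟨x, -, rfl⟩, ⟨y, -, rfl⟩, -, a, ha, b, hb, hab⟩ := h.1
  have ha' := mem_union_left (block T σ y) ha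
  have hb' := mem_union_right (block T σ x) hb
  refine ⟨?_, hconv, one_lt_card.2 ⟨a, ha', b, hb', hab.ne⟩⟩
  exact (block_isConnectedIn hT.isConnectedIn hT.isLaminar x).union
    (block_isConnectedIn hT.isConnectedIn hT.isLaminar y) ha hb
    (hconv.reflTransGen_hasseAdj ha' hb' hab.le)

/-- Members of `T` strictly inside `σ` lie in a single block. -/
lemma BlockRel.compatible_union (hT : IsLaminar T) (hσ : σ ∈ insert univ T)
    (h : BlockRel T σ X Y) : ∀ t ∈ T, t ⊆ X ∪ Y ∨ X ∪ Y ⊆ t ∨ ∀ x ∈ t, x ∉ X ∪ Y := by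
  intro t ht
  have hρσ := h.union_subset
  by_cases htσ : t ⊆ σ
  · rcases htσ.eq_or_ssubset with rfl | htσ
    · exact .inr (.inl hρσ)
    rcases t.eq_empty_or_nonempty with rfl | ⟨w, hw⟩
    · exact .inl (empty_subset _)
    have htw := subset_block ht htσ hw
    by_cases hwρ : w ∈ X ∪ Y
    · exact .inl (htw.trans (h.block_subset_union hT hwρ))
    · refine .inr (.inr fun u hu huρ => hwρ ?_)
      have huw := block_eq_of_mem hT (htw hu)
      exact h.block_subset_union hT huρ (by rw [huw]; exact mem_block_self T σ w)
  · rcases hT t ht σ (mem_of_mem_insert_univ hσ htσ) with h' | h' | h'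
    · exact absurd h' htσ
    · exact .inr (.inl (hρσ.trans h'))
    · exact .inr (.inr fun u hu huρ => h' u hu (hρσ huρ))

lemma BlockRel.reflTransGen_block_of_chain (hT : IsProperTubing T) (hσ : σ ∈ insert univ T)
    (h : BlockRel T σ X Y)
    (hwρ : ReflTransGen (TubingRel (insert (X ∪ Y) T)) w (X ∪ Y))
    (hρw : ReflTransGen (TubingRel (insert (X ∪ Y) T)) (X ∪ Y) w) (hne : w ≠ X ∪ Y) :
    ∀ b ∈ w, ReflTransGen (BlockRel T σ) (block T σ b) Y := by
  have hρσ := h.union_subset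
  induction hwρ using ReflTransGen.head_induction_on with
  | refl => exact absurd rfl hne
  | @head w w' hww' hw'ρ ih =>
    intro b hb
    have hwσ := subset_of_cycle_insert hT.isLaminar hT.2.2 hσ hρσ hρw (hw'ρ.head hww')
    have hw'σ := subset_of_cycle_insert hT.isLaminar hT.2.2 hσ hρσ (hρw.tail hww') hw'ρ
    obtain ⟨hwT, -, hdisj, a, ha, c, hc, hac⟩ := id hww'
    have hwT : w ∈ T := (mem_insert.1 hwT).resolve_left hne
    have hwss : w ⊂ σ := ssubset_of_subset_of_ne hwσ (by rintro rfl; exact hdisj c (hw'σ hc) hc)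
    rw [← block_eq_of_mem hT.isLaminar (subset_block hwT hwss hb ha)]
    refine (reflTransGen_blockRel_of_le (hwσ ha) (hw'σ hc) hac.le).trans ?_
    by_cases hw' : w' = X ∪ Y
    · exact (h.reflTransGen_of_mem_union hT.isLaminar (hw' ▸ hc)).2
    · exact ih (hρw.tail hww') hw' c hc

/-- A cycle through `X ∪ Y` would leave it towards a block strictly between `X` and `Y`. -/
lemma IsBlockCover.not_transGen_insert (hT : IsProperTubing T) (hσ : σ ∈ insert univ T)
    (h : IsBlockCover T σ X Y) : ¬ TransGen (TubingRel (insert (X ∪ Y) T)) (X ∪ Y) (X ∪ Y) := by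
  intro hcyc
  obtain ⟨v, hρv, hvρ⟩ := TransGen.head'_iff.1 hcyc
  have hρσ := h.1.union_subset
  have hvσ := subset_of_cycle_insert hT.isLaminar hT.2.2 hσ hρσ (.single hρv) hvρ
  obtain ⟨-, -, hdisj, a, ha, b, hb, hab⟩ := id hρv
  have hbρ : b ∉ X ∪ Y := fun hbρ => hdisj b hbρ hb
  refine hbρ (h.2 b (hvσ hb) ?_ ?_)
  · exact (h.1.reflTransGen_of_mem_union hT.isLaminar ha).1.trans
      (reflTransGen_blockRel_of_le (hρσ ha) (hvσ hb) hab.le)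
  · exact h.1.reflTransGen_block_of_chain hT hσ hvρ (.single hρv) (by rintro rfl; exact hbρ hb) b hb

/-- Otherwise `X ∪ Y` could be added to the maximal tubing `T`. -/
lemma IsBlockCover.union_eq (hT : IsMaximalTubing T) (hσ : σ ∈ insert univ T)
    (h : IsBlockCover T σ X Y) : X ∪ Y = σ := by
  by_contra hne
  have hss : X ∪ Y ⊂ σ := ssubset_of_subset_of_ne h.1.union_subset hne
  have hPT := hT.1
  have hρ : IsProperTube (X ∪ Y) := by
    refine ⟨h.isTube hPT (hPT.isConvexIn_of_mem_insert_univ hσ), ?_⟩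
    have := (card_lt_card hss).trans_le (card_le_univ σ)
    omega
  have hT' : IsProperTubing (insert (X ∪ Y) T) :=
    ⟨fun t ht => (mem_insert.1 ht).elim (· ▸ hρ) (hPT.1 t),
      hPT.isLaminar.insert (h.1.compatible_union hPT.isLaminar hσ),
      fun t _ => acyclic_insert hPT.2.2 (h.not_transGen_insert hPT hσ) t⟩
  exact h.union_notMem hPT.isLaminar hss (hT.2 _ hT' (subset_insert _ _) ▸ mem_insert_self _ _)

end Merge

lemma inter_nonempty_of_subset_union {α : Type*} [DecidableEq α] {τ U V : Finset α}
    (h : τ ⊆ U ∪ V) (hV : ¬ τ ⊆ V) : (U ∩ τ).Nonempty := by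
  obtain ⟨z, hz, hzV⟩ := not_subset.1 hV
  exact ⟨z, mem_inter.2 ⟨(mem_union.1 (h hz)).resolve_right hzV, hz⟩⟩

lemma not_subset_block {α : Type*} [Fintype α] [DecidableEq α] {T : Finset (Finset α)}
    {σ τ : Finset α} (hT : IsLaminar T) (hτ : 2 ≤ τ.card)
    (hmin : ∀ σ' ∈ insert univ T, τ ⊆ σ' → σ ⊆ σ') (x : α) : ¬ τ ⊆ block T σ x := by
  intro h
  rcases block_eq_singleton_or (σ := σ) hT x with hx | ⟨hxT, hxσ⟩
  · have := card_le_card (hx ▸ h)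
    rw [card_singleton] at this
    omega
  · exact hxσ.not_subset (hmin _ (mem_insert_of_mem hxT) h)

theorem partition_lemma_general {α : Type*} [Fintype α] [PartialOrder α] [DecidableEq α]
    (hconn : IsConnectedIn (Finset.univ : Finset α))
    (T : Finset (Finset α)) (hT : IsMaximalTubing T)
    (τ : Finset α) (hτ : IsProperTube τ)
    (σ : Finset α) (hσ : σ ∈ insert Finset.univ T) (hτσ : τ ⊆ σ)
    (hmin : ∀ σ' ∈ insert Finset.univ T, τ ⊆ σ' → σ ⊆ σ') :
    ∃ A B : Finset α, A ∪ B = σ ∧ Disjoint A B ∧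
      (∀ b ∈ A, ∀ a ∈ σ, a ≤ b → a ∈ A) ∧
      (∀ a ∈ B, ∀ b ∈ σ, a ≤ b → b ∈ B) ∧
      (A ∈ T ∨ A.card = 1) ∧ (B ∈ T ∨ B.card = 1) ∧
      (A ∩ τ).Nonempty ∧ (B ∩ τ).Nonempty := by
  have hPT := hT.1
  have hτblock := not_subset_block hPT.isLaminar hτ.1.2.2 hmin
  obtain ⟨x, hxτ⟩ : τ.Nonempty := card_pos.1 (by have := hτ.1.2.2; omega)
  obtain ⟨y, hyτ, hy⟩ := not_subset.1 (hτblock x)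
  obtain ⟨C, D, hCD⟩ := exists_blockRel (hPT.isConnectedIn_of_mem_insert_univ hconn hσ)
    (hτσ hxτ) (hτσ hyτ) fun h => hy (h ▸ mem_block_self T σ y)
  obtain ⟨X, Y, hXY⟩ := exists_isBlockCover hPT hCD
  have hσXY := hXY.union_eq hT hσ
  have hτXY : τ ⊆ X ∪ Y := hσXY ▸ hτσ
  obtain ⟨⟨x', -, rfl⟩, ⟨y', -, rfl⟩, -⟩ := hXY.1
  exact ⟨_, _, hσXY, disjoint_left.2 fun _ => hXY.1.disjoint hPT.isLaminar _,
    fun _ hb _ => hXY.1.mem_left_of_le hPT hσXY hb,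
    fun _ ha _ => hXY.1.mem_right_of_le hPT hσXY ha,
    block_mem_or_card_eq_one hPT.isLaminar x', block_mem_or_card_eq_one hPT.isLaminar y',
    inter_nonempty_of_subset_union hτXY (hτblock y'),
    inter_nonempty_of_subset_union (union_comm (block T σ x') _ ▸ hτXY) (hτblock x')⟩

/-- for a maximal tubing `T` and a proper tube `τ ∉ T` with
`σ = conv_T(τ)` the minimal tube of `T ∪ {P}` containing `τ`, `T` partitions `σ`
into a lower set `A` and an upper set `B` (each a tube of `T` or a singleton),
both meeting `τ`. -/
theorem partition_lemma {α : Type*} [Fintype α] [PartialOrder α] [DecidableEq α]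
    (hconn : IsConnectedIn (Finset.univ : Finset α)) (hn : 2 ≤ Fintype.card α)
    (T : Finset (Finset α)) (hT : IsMaximalTubing T)
    (τ : Finset α) (hτ : IsProperTube τ) (hτT : τ ∉ T)
    (σ : Finset α) (hσ : σ ∈ insert Finset.univ T) (hτσ : τ ⊆ σ)
    (hmin : ∀ σ' ∈ insert Finset.univ T, τ ⊆ σ' → σ ⊆ σ') :
    ∃ A B : Finset α, A ∪ B = σ ∧ Disjoint A B ∧
      (∀ b ∈ A, ∀ a ∈ σ, a ≤ b → a ∈ A) ∧
      (∀ a ∈ B, ∀ b ∈ σ, a ≤ b → b ∈ B) ∧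
      (A ∈ T ∨ A.card = 1) ∧ (B ∈ T ∨ B.card = 1) ∧
      (A ∩ τ).Nonempty ∧ (B ∩ τ).Nonempty :=
  partition_lemma_general hconn T hT τ hτ σ hσ hτσ hmin
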